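/- Let s ∈ ℂ with Re s < 0 and w := e^s. For each n ∈ ℕ the series b_n := Σ_{k≥0} k^n w^k converges absolutely. Let d := dist(s, 2πiℤ) > 0. Then the power series Σ_{n≥0} (−1)^n b_n ζ^n/n! has radius of convergence exactly d, and for every ζ ∈ ℂ with |ζ| < d one has Σ_{n≥0} (−1)^n b_n ζ^n/n! = 1/(1 − e^{s−ζ}). -/

import Mathlib

/-!
For `Re s + ‖ζ‖ < 0` the double series `Σₖ Σₙ wᵏ (-kζ)ⁿ / n!`, `w = eˢ`, converges absolutely.
Summing it over `k` first gives the Borel transform, over `n` first the geometric series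
`Σₖ e^{k(s-ζ)} = 1 / (1 - e^{s-ζ})`. This function is holomorphic on the disc `‖ζ‖ < d`, whose
boundary contains the nearest pole `s - y`, `y ∈ 2πiℤ`; by Cauchy's theorem the Taylor series at `0`
converges to it on the whole disc. If the series converged at some `‖ζ‖ > d`, its sum would be
continuous at `s - y`, and `(1 - e^{s-z}) · sum z = 1` on the disc would give `0 = 1` there.
-/

open Complex Metric FormalMultilinearSeries
open scoped ENNReal NNReal Nat

/-- The lattice `2πiℤ ⊆ ℂ`. -/
def twoPiIZ : Set ℂ :=
  Set.range (fun m : ℤ => ((2 * Real.pi : ℝ) : ℂ) * Complex.I * (m : ℂ))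

lemma twoPiIZ_eq_exp_preimage_one : twoPiIZ = exp ⁻¹' {1} := by
  ext z
  simp only [twoPiIZ, Set.mem_range, Set.mem_preimage, Set.mem_singleton_iff, exp_eq_one_iff]
  refine exists_congr fun m => ?_
  push_cast
  constructor <;> (rintro rfl; ring)

lemma isClosed_twoPiIZ : IsClosed twoPiIZ := by
  rw [twoPiIZ_eq_exp_preimage_one]
  exact isClosed_singleton.preimage continuous_exp

lemma twoPiIZ_nonempty : twoPiIZ.Nonempty := ⟨0, 0, by simp⟩

lemma infDist_twoPiIZ_pos {s : ℂ} (hs : exp s ≠ 1) : 0 < infDist s twoPiIZ := by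
  rwa [← isClosed_twoPiIZ.notMem_iff_infDist_pos twoPiIZ_nonempty, twoPiIZ_eq_exp_preimage_one]

lemma exp_sub_ne_one_of_norm_lt_infDist {s ζ : ℂ} (hζ : ‖ζ‖ < infDist s twoPiIZ) :
    exp (s - ζ) ≠ 1 := by
  intro h
  have hmem : s - ζ ∈ twoPiIZ := by rwa [twoPiIZ_eq_exp_preimage_one]
  have := infDist_le_dist_of_mem (x := s) hmem
  rw [dist_eq_norm, sub_sub_cancel] at this
  linarith

lemma FormalMultilinearSeries.le_radius_of_summable_apply {𝕜 E : Type*}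
    [NontriviallyNormedField 𝕜] [NormedAddCommGroup E] [NormedSpace 𝕜 E]
    {p : FormalMultilinearSeries 𝕜 𝕜 E} {z : 𝕜} (h : Summable fun n => p n fun _ => z) :
    (‖z‖₊ : ℝ≥0∞) ≤ p.radius := by
  refine p.le_radius_of_tendsto (l := 0) ?_
  have hterms := h.tendsto_atTop_zero.norm
  rw [norm_zero] at hterms
  refine hterms.congr fun n => ?_
  simp [norm_smul, norm_apply_eq_norm_coef, mul_comm]

lemma HasFPowerSeriesAt.hasSum_of_differentiableOn_ball {E : Type*} [NormedAddCommGroup E]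
    [NormedSpace ℂ E] [CompleteSpace E] {f : ℂ → E}
    {p : FormalMultilinearSeries ℂ ℂ E} {c y : ℂ} {r : ℝ} (hp : HasFPowerSeriesAt f p c)
    (hf : DifferentiableOn ℂ f (ball c r)) (hy : ‖y‖ < r) :
    HasSum (fun n => p n fun _ => y) (f (c + y)) := by
  obtain ⟨R, hyR, hRr⟩ := exists_between hy
  have hR : 0 < R := (norm_nonneg y).trans_lt hyR
  lift R to ℝ≥0 using hR.le
  obtain ⟨r₁, hp₁⟩ := hp
  have hcauchy := (hf.mono (closedBall_subset_ball hRr)).hasFPowerSeriesOnBall hR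
  refine (hp₁.exchange_radius hcauchy).hasSum ?_
  simpa using hyR

lemma FormalMultilinearSeries.radius_le_of_mul_sum_eq_one {p : FormalMultilinearSeries ℂ ℂ ℂ}
    {g : ℂ → ℂ} {z₀ : ℂ} (hz₀ : z₀ ≠ 0) (hg : ContinuousAt g z₀) (hgz₀ : g z₀ = 0)
    (hsum : ∀ z, ‖z‖ < ‖z₀‖ → g z * p.sum z = 1) : p.radius ≤ ‖z₀‖₊ := by
  by_contra! hlt
  have hz₀_mem : z₀ ∈ eball 0 p.radius := mem_eball_zero_iff.2 (by rwa [enorm_eq_nnnorm])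
  have hcont : ContinuousAt (fun z => g z * p.sum z) z₀ :=
    hg.mul (p.continuousOn.continuousAt (isOpen_eball.mem_nhds hz₀_mem))
  have hclosure : z₀ ∈ closure (ball 0 ‖z₀‖) := by
    rw [closure_ball _ (norm_ne_zero_iff.2 hz₀)]
    simp
  have himage : (fun z => g z * p.sum z) '' ball 0 ‖z₀‖ ⊆ {1} := by
    rintro _ ⟨z, hz, rfl⟩
    exact hsum z (by simpa using hz)
  have := closure_mono himage (mem_closure_image hcont hclosure)
  simp [hgz₀] at this

noncomputable def borelCoeff (w : ℂ) (n : ℕ) : ℂ :=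
  (-1) ^ n * (∑' k : ℕ, (k : ℂ) ^ n * w ^ k) / n !

noncomputable def borelSeries (w : ℂ) : FormalMultilinearSeries ℂ ℂ ℂ :=
  ofScalars ℂ (borelCoeff w)

@[simp]
lemma borelSeries_apply (w z : ℂ) (n : ℕ) :
    (borelSeries w n fun _ => z) = borelCoeff w n * z ^ n := by
  rw [borelSeries, ofScalars_apply_eq, smul_eq_mul]

/-- Summed over `n` first this gives the geometric series `Σₖ (w e^{-ζ})ᵏ`, summed over `k` first
the Borel transform. -/
noncomputable def borelTerm (w ζ : ℂ) (p : ℕ × ℕ) : ℂ :=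
  w ^ p.1 * (p.1 * -ζ) ^ p.2 / p.2 !

section Borel

variable {w ζ : ℂ}

lemma summable_norm_borelTerm (h : ‖w‖ * Real.exp ‖ζ‖ < 1) :
    Summable fun p => ‖borelTerm w ζ p‖ := by
  have hnorm (k n : ℕ) : ‖borelTerm w ζ (k, n)‖ = ‖w‖ ^ k * ((k * ‖ζ‖) ^ n / n !) := by
    simp [borelTerm, mul_div_assoc]
  refine (summable_prod_of_nonneg fun _ => norm_nonneg _).2 ⟨fun k => ?_, ?_⟩
  · simpa only [hnorm] using (Real.summable_pow_div_factorial _).mul_left (‖w‖ ^ k)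
  · refine (summable_geometric_of_lt_one (by positivity) h).congr fun k => ?_
    have hrow := (NormedSpace.expSeries_div_hasSum_exp ((k : ℝ) * ‖ζ‖)).mul_left (‖w‖ ^ k)
    rw [← Real.exp_eq_exp_ℝ, Real.exp_nat_mul, ← mul_pow] at hrow
    rw [tsum_congr (hnorm k), hrow.tsum_eq]

lemma hasSum_borelTerm_row (k : ℕ) :
    HasSum (fun n => borelTerm w ζ (k, n)) ((w * exp (-ζ)) ^ k) := by
  have := (NormedSpace.expSeries_div_hasSum_exp ((k : ℂ) * -ζ)).mul_left (w ^ k)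
  rw [← exp_eq_exp_ℂ, exp_nat_mul, ← mul_pow] at this
  simpa only [borelTerm, mul_div_assoc] using this

lemma hasSum_borelTerm_col (hw : ‖w‖ < 1) (n : ℕ) :
    HasSum (fun k => borelTerm w ζ (k, n)) (borelCoeff w n * ζ ^ n) := by
  have hterm (k : ℕ) : borelTerm w ζ (k, n) = (-ζ) ^ n / n ! * ((k : ℂ) ^ n * w ^ k) := by
    simp only [borelTerm]
    ring
  have hcoeff : borelCoeff w n * ζ ^ n = (-ζ) ^ n / n ! * ∑' k : ℕ, (k : ℂ) ^ n * w ^ k := by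
    rw [borelCoeff, neg_pow]
    ring
  simpa only [hterm, hcoeff] using
    (summable_norm_pow_mul_geometric_of_norm_lt_one n hw).of_norm.hasSum.mul_left ((-ζ) ^ n / n !)

theorem hasSum_borelCoeff_mul_pow (h : ‖w‖ * Real.exp ‖ζ‖ < 1) :
    HasSum (fun n => borelCoeff w n * ζ ^ n) (1 - w * exp (-ζ))⁻¹ := by
  have hw : ‖w‖ < 1 :=
    (le_mul_of_one_le_right (norm_nonneg w) (Real.one_le_exp (norm_nonneg ζ))).trans_lt h
  have hq : ‖w * exp (-ζ)‖ < 1 := by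
    refine lt_of_le_of_lt ?_ h
    rw [norm_mul, norm_exp]
    gcongr
    rw [neg_re]
    exact (neg_le_abs _).trans (abs_re_le_norm ζ)
  have hF : HasSum (borelTerm w ζ) (1 - w * exp (-ζ))⁻¹ := by
    have hF := (summable_norm_borelTerm h).of_norm.hasSum
    rwa [(hF.prod_fiberwise hasSum_borelTerm_row).unique
      (hasSum_geometric_of_norm_lt_one hq)] at hF
  exact ((Equiv.prodComm ℕ ℕ).hasSum_iff.2 hF).prod_fiberwise (hasSum_borelTerm_col hw)

end Borel

section Poincare

variable {s ζ : ℂ}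

lemma norm_exp_lt_one_of_re_neg (hs : s.re < 0) : ‖exp s‖ < 1 := by
  rwa [norm_exp, Real.exp_lt_one_iff]

lemma exp_ne_one_of_re_neg (hs : s.re < 0) : exp s ≠ 1 :=
  ne_of_apply_ne norm (by rw [norm_one]; exact (norm_exp_lt_one_of_re_neg hs).ne)

lemma hasSum_borelSeries_of_re_add_norm_neg (h : s.re + ‖ζ‖ < 0) :
    HasSum (fun n => borelSeries (exp s) n fun _ => ζ) (1 - exp (s - ζ))⁻¹ := by
  have hconv : ‖exp s‖ * Real.exp ‖ζ‖ < 1 := by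
    rwa [norm_exp, ← Real.exp_add, Real.exp_lt_one_iff]
  simpa only [borelSeries_apply, ← exp_add, ← sub_eq_add_neg] using
    hasSum_borelCoeff_mul_pow hconv

lemma hasFPowerSeriesAt_borelSeries (hs : s.re < 0) :
    HasFPowerSeriesAt (fun z => (1 - exp (s - z))⁻¹) (borelSeries (exp s)) 0 := by
  refine ⟨ENNReal.ofReal (-s.re), ?_, by simpa using hs, fun {y} hy => ?_⟩
  · refine ENNReal.le_of_forall_nnreal_lt fun r hr => ?_
    have hr' : (r : ℝ) < -s.re := by simpa using hr
    have hconv : s.re + ‖(r : ℂ)‖ < 0 := by simpa using (by linarith : s.re + r < 0)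
    simpa using le_radius_of_summable_apply (hasSum_borelSeries_of_re_add_norm_neg hconv).summable
  · have hy' : ‖y‖ < -s.re := by simpa using hy
    simpa using hasSum_borelSeries_of_re_add_norm_neg (ζ := y) (by linarith)

lemma hasSum_borelSeries_of_norm_lt_infDist (hs : s.re < 0) (hζ : ‖ζ‖ < infDist s twoPiIZ) :
    HasSum (fun n => borelSeries (exp s) n fun _ => ζ) (1 - exp (s - ζ))⁻¹ := by
  have hf : DifferentiableOn ℂ (fun z => (1 - exp (s - z))⁻¹) (ball 0 (infDist s twoPiIZ)) := by
    intro z hz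
    have hz' : ‖z‖ < infDist s twoPiIZ := by simpa using hz
    refine (DifferentiableAt.inv (by fun_prop) ?_).differentiableWithinAt
    exact sub_ne_zero.2 (exp_sub_ne_one_of_norm_lt_infDist hz').symm
  simpa using (hasFPowerSeriesAt_borelSeries hs).hasSum_of_differentiableOn_ball hf hζ

lemma not_summable_borelSeries_of_infDist_lt (hs : s.re < 0) (hζ : infDist s twoPiIZ < ‖ζ‖) :
    ¬ Summable fun n => borelSeries (exp s) n fun _ => ζ := by
  intro hsum
  obtain ⟨y, hy, hdist⟩ := isClosed_twoPiIZ.exists_infDist_eq_dist twoPiIZ_nonempty s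
  have hnorm : ‖s - y‖ = infDist s twoPiIZ := by rw [hdist, dist_eq_norm]
  have hpos : 0 < infDist s twoPiIZ := infDist_twoPiIZ_pos (exp_ne_one_of_re_neg hs)
  have hrad := (le_radius_of_summable_apply hsum).trans
    (radius_le_of_mul_sum_eq_one (g := fun z => 1 - exp (s - z)) (z₀ := s - y) ?_ ?_ ?_ ?_)
  · have : ‖ζ‖ ≤ ‖s - y‖ := by exact_mod_cast hrad
    linarith
  · exact norm_ne_zero_iff.1 (hnorm ▸ hpos.ne')
  · fun_prop
  · have hexp : exp y = 1 := by rwa [twoPiIZ_eq_exp_preimage_one] at hy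
    rw [sub_sub_cancel, hexp, sub_self]
  · intro z hz
    rw [hnorm] at hz
    rw [FormalMultilinearSeries.sum, (hasSum_borelSeries_of_norm_lt_infDist hs hz).tsum_eq,
      mul_inv_cancel₀ (sub_ne_zero.2 (exp_sub_ne_one_of_norm_lt_infDist hz).symm)]

end Poincare

/-- Poincaré's example: for `Re s < 0` and `w = e^s`, the numbers `bₙ = Σ_k kⁿ wᵏ` are
well defined, `d = dist(s, 2πiℤ) > 0`, the Borel transform `Σ (-1)ⁿ bₙ ζⁿ/n!` has radius
of convergence exactly `d`, and its sum is `1/(1 − e^{s−ζ})` on `|ζ| < d`. -/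
theorem stmt_9 (s : ℂ) (hs : s.re < 0) :
    (∀ n : ℕ, Summable (fun k : ℕ => ‖(k : ℂ) ^ n * Complex.exp s ^ k‖)) ∧
      0 < Metric.infDist s twoPiIZ ∧
      (∀ ζ : ℂ, ‖ζ‖ < Metric.infDist s twoPiIZ →
        Summable (fun n : ℕ =>
          (-1 : ℂ) ^ n * (∑' k : ℕ, (k : ℂ) ^ n * Complex.exp s ^ k) * ζ ^ n /
            (Nat.factorial n : ℂ))) ∧
      (∀ ζ : ℂ, Metric.infDist s twoPiIZ < ‖ζ‖ →
        ¬ Summable (fun n : ℕ =>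
          (-1 : ℂ) ^ n * (∑' k : ℕ, (k : ℂ) ^ n * Complex.exp s ^ k) * ζ ^ n /
            (Nat.factorial n : ℂ))) ∧
      ∀ ζ : ℂ, ‖ζ‖ < Metric.infDist s twoPiIZ →
        (∑' n : ℕ,
            (-1 : ℂ) ^ n * (∑' k : ℕ, (k : ℂ) ^ n * Complex.exp s ^ k) * ζ ^ n /
              (Nat.factorial n : ℂ)) =
          1 / (1 - Complex.exp (s - ζ)) := by
  have hterm (ζ : ℂ) (n : ℕ) :
      (-1 : ℂ) ^ n * (∑' k : ℕ, (k : ℂ) ^ n * exp s ^ k) * ζ ^ n / n ! =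
        borelSeries (exp s) n fun _ => ζ := by
    rw [borelSeries_apply, borelCoeff]
    ring
  simp only [hterm, one_div]
  refine ⟨fun n => summable_norm_pow_mul_geometric_of_norm_lt_one n (norm_exp_lt_one_of_re_neg hs),
    infDist_twoPiIZ_pos (exp_ne_one_of_re_neg hs), fun ζ hζ => ?_,
    fun ζ hζ => not_summable_borelSeries_of_infDist_lt hs hζ, fun ζ hζ => ?_⟩
  · exact (hasSum_borelSeries_of_norm_lt_infDist hs hζ).summable
  · exact (hasSum_borelSeries_of_norm_lt_infDist hs hζ).tsum_eq
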